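/- Let G = (V,E,e) be a connected finite simple rooted graph and k ≥ 1 such that σ = |V_e^{[k]}| ≥ 1, where V_e^{[k]} is the set of vertices of G at distance exactly k from e, and let M = max_{x ∈ V} |V_x^{[k]}|. Then for every N ≥ 1, the number of closed walks of length 4 based at the root e in the distance k-graph (G^{⋆N})^{[k]} of the N-fold star power — equivalently, the (e,e)-entry of (A^{[⋆N,k]})⁴ — satisfies (Nσ)² ≤ ((A^{[⋆N,k]})⁴)_{ee} ≤ (Nσ)² + NσMσ. Consequently 1 ≤ ((A^{[⋆N,k]}/√(Nσ))⁴)_{ee} ≤ 1 + M/N. -/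

import Mathlib

open MeasureTheory Filter
open scoped ENNReal Topology

noncomputable section

/-- The distance `k`-graph of a graph: same vertices, edges between vertices at distance `k`. -/
def distGraph {W : Type*} (H : SimpleGraph W) (k : ℕ) : SimpleGraph W where
  Adj x y := x ≠ y ∧ H.dist x y = k
  symm := ⟨fun x y h => ⟨h.1.symm, by rw [SimpleGraph.dist_comm]; exact h.2⟩⟩
  loopless := ⟨fun x h => h.1 rfl⟩

/-- Vertex set of the `N`-fold star power of a graph rooted at `e`:
the common root `none`, plus `N` copies of the non-root vertices. -/
abbrev StarVert (V : Type*) (e : V) (N : ℕ) := Option (Fin N × {v : V // v ≠ e})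

def starAdj {V : Type*} (G : SimpleGraph V) (e : V) (N : ℕ) :
    StarVert V e N → StarVert V e N → Prop
  | none, none => False
  | none, some q => G.Adj e q.2.1
  | some p, none => G.Adj p.2.1 e
  | some p, some q => p.1 = q.1 ∧ G.Adj p.2.1 q.2.1

/-- The `N`-fold star power of a rooted graph `(G, e)`: `N` copies of `G` glued at `e`. -/
def starPower {V : Type*} (G : SimpleGraph V) (e : V) (N : ℕ) :
    SimpleGraph (StarVert V e N) where
  Adj := starAdj G e N
  symm := by
    refine ⟨?_⟩
    rintro (_ | p) (_ | q) h
    · exact h.elim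
    · exact h.symm
    · exact h.symm
    · exact ⟨h.1.symm, h.2.symm⟩
  loopless := by
    refine ⟨?_⟩
    rintro (_ | p) h
    · exact h.elim
    · exact G.ne_of_adj h.2 rfl

/-- The vertex of the `i`-th copy of `G` in the `N`-fold star power corresponding to `v ∈ G`. -/
def rootedEmbed {V : Type*} [DecidableEq V] (e : V) (N : ℕ) (i : Fin N) (v : V) :
    StarVert V e N :=
  if h : v = e then none else some (i, ⟨v, h⟩)

open scoped Classical in
/-- The real adjacency matrix of a graph. -/
def adjMat {W : Type*} [Fintype W] (H : SimpleGraph W) : Matrix W W ℝ :=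
  fun x y => if H.Adj x y then 1 else 0

/-- The centered Bernoulli distribution `(1/2)δ_{-1} + (1/2)δ_1`. -/
def bern : Measure ℝ := (1/2 : ℝ≥0∞) • Measure.dirac (-1) + (1/2 : ℝ≥0∞) • Measure.dirac 1

/-- The Cauchy transform of a measure on `ℝ`. -/
def cauchyT (μ : Measure ℝ) (z : ℂ) : ℂ := ∫ x, (z - (x : ℂ))⁻¹ ∂μ

/-- The distance `d(μ₁,μ₂) = sup_{Im z ≥ 1} |G_{μ₁}(z) - G_{μ₂}(z)|`. -/
def cdist (μ₁ μ₂ : Measure ℝ) : ℝ :=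
  ⨆ z : {z : ℂ // 1 ≤ z.im}, ‖cauchyT μ₁ z - cauchyT μ₂ z‖

/-! In the distance-`k` graph `D` of the star power every neighbour of the root `o` lies in one
copy, at distance `k` from `e`, and so do all its other `D`-neighbours: a path between two copies
passes through `o`, hence has length at least `k + 1`. Let `c y` be the number of common
`D`-neighbours of `o` and `y`. Then `(A⁴)ₒₒ = ∑ y, c y ^ 2` with `c o = deg o = Nσ`, every other
`c y` is at most `σ`, and double counting gives `∑_{y ≠ o} c y = ∑_{x ~ o} #(N x \ {o}) ≤ Nσ M`,
so that `∑_{y ≠ o} c y ^ 2 ≤ σ · Nσ M`. -/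

open Finset SimpleGraph

theorem Nat.card_setOf_eq_card_filter {V : Type*} [Fintype V] (p : V → Prop) [DecidablePred p] :
    Nat.card {v : V | p v} = #{v | p v} := by
  simp [Nat.card_eq_fintype_card, Fintype.card_subtype]

theorem adjMat_eq_adjMatrix {W : Type*} [Fintype W] (H : SimpleGraph W) [DecidableRel H.Adj] :
    adjMat H = H.adjMatrix ℝ := by
  ext x y
  simp only [adjMat, adjMatrix_apply]
  congr

namespace SimpleGraph

section

variable {W : Type*} [Fintype W] [DecidableEq W] (H : SimpleGraph W) [DecidableRel H.Adj]

theorem adjMatrix_sq_apply {R : Type*} [Semiring R] (v w : W) :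
    (H.adjMatrix R ^ 2) v w = #(H.neighborFinset v ∩ H.neighborFinset w) := by
  rw [sq, adjMatrix_mul_apply]
  simp only [adjMatrix_apply, sum_boole]
  congr 2
  ext u
  simp [adj_comm]

theorem adjMatrix_pow_four_apply_self {R : Type*} [Semiring R] (o : W) :
    (H.adjMatrix R ^ 4) o o = ((∑ y, #(H.neighborFinset o ∩ H.neighborFinset y) ^ 2 : ℕ) : R) := by
  rw [show 4 = 2 + 2 from rfl, pow_add, Matrix.mul_apply]
  push_cast
  refine Finset.sum_congr rfl fun y _ => ?_
  rw [adjMatrix_sq_apply, adjMatrix_sq_apply, inter_comm (H.neighborFinset y), sq]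

theorem sum_card_neighborFinset_inter_erase (o : W) :
    ∑ y ∈ univ.erase o, #(H.neighborFinset o ∩ H.neighborFinset y) =
      ∑ x ∈ H.neighborFinset o, #((H.neighborFinset x).erase o) := by
  have := sum_card_bipartiteAbove_eq_sum_card_bipartiteBelow (s := H.neighborFinset o)
    (t := univ.erase o) (r := H.Adj)
  convert this.symm using 3 with y _ x _
  · ext x; simp [bipartiteBelow, adj_comm]
  · ext y; simp [bipartiteAbove, and_comm]

theorem degree_sq_le_sum_sq_card_neighborFinset_inter (o : W) :
    H.degree o ^ 2 ≤ ∑ y, #(H.neighborFinset o ∩ H.neighborFinset y) ^ 2 := by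
  simpa [card_neighborFinset_eq_degree] using
    single_le_sum (f := fun y => #(H.neighborFinset o ∩ H.neighborFinset y) ^ 2)
      (fun _ _ => Nat.zero_le _) (mem_univ o)

theorem sum_sq_card_neighborFinset_inter_le (o : W) {s m : ℕ}
    (hs : ∀ y ≠ o, #(H.neighborFinset o ∩ H.neighborFinset y) ≤ s)
    (hm : ∀ x ∈ H.neighborFinset o, #((H.neighborFinset x).erase o) ≤ m) :
    ∑ y, #(H.neighborFinset o ∩ H.neighborFinset y) ^ 2 ≤
      H.degree o ^ 2 + H.degree o * m * s := by
  rw [← add_sum_erase _ _ (mem_univ o), inter_self, card_neighborFinset_eq_degree]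
  gcongr
  calc ∑ y ∈ univ.erase o, #(H.neighborFinset o ∩ H.neighborFinset y) ^ 2
      ≤ ∑ y ∈ univ.erase o, #(H.neighborFinset o ∩ H.neighborFinset y) * s :=
        sum_le_sum fun y hy => by rw [sq]; gcongr; exact hs y (ne_of_mem_erase hy)
    _ = (∑ x ∈ H.neighborFinset o, #((H.neighborFinset x).erase o)) * s := by
        rw [← sum_mul, sum_card_neighborFinset_inter_erase]
    _ ≤ H.degree o * m * s := by
        gcongr
        simpa [card_neighborFinset_eq_degree] using sum_le_card_nsmul _ _ _ hm

end

section

variable {V V' : Type*} {G : SimpleGraph V} {G' : SimpleGraph V'}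

theorem Reachable.dist_map_le (f : G →g G') {u v : V} (h : G.Reachable u v) :
    G'.dist (f u) (f v) ≤ G.dist u v := by
  obtain ⟨p, hp⟩ := h.exists_walk_length_eq_dist
  simpa [hp] using dist_le (p.map f)

theorem Reachable.dist_add_dist_le_of_forall_mem_support {u v w : V} (h : G.Reachable u v)
    (hw : ∀ p : G.Walk u v, w ∈ p.support) : G.dist u w + G.dist w v ≤ G.dist u v := by
  classical
  obtain ⟨p, hp⟩ := h.exists_walk_length_eq_dist
  have hsplit := congrArg Walk.length (p.take_spec (hw p))
  rw [Walk.length_append] at hsplit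
  have := dist_le (p.takeUntil w (hw p))
  have := dist_le (p.dropUntil w (hw p))
  omega

end

end SimpleGraph

section

variable {V : Type*} [DecidableEq V] {e : V} {N : ℕ}

@[simp] theorem rootedEmbed_self (i : Fin N) : rootedEmbed e N i e = none := dif_pos rfl

theorem rootedEmbed_of_ne (i : Fin N) {v : V} (hv : v ≠ e) :
    rootedEmbed e N i v = some (i, ⟨v, hv⟩) := dif_neg hv

@[simp] theorem rootedEmbed_eq_none_iff {i : Fin N} {v : V} :
    rootedEmbed e N i v = none ↔ v = e := by
  unfold rootedEmbed; split_ifs <;> simp_all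

@[simp] theorem rootedEmbed_eq_some_iff {i j : Fin N} {v : V} {a : {v : V // v ≠ e}} :
    rootedEmbed e N j v = some (i, a) ↔ j = i ∧ v = a := by
  unfold rootedEmbed; split_ifs with h
  · subst h; exact iff_of_false (by simp) fun h' => a.2 h'.2.symm
  · simp [Subtype.ext_iff]

end

namespace starPower

variable {V : Type*} {G : SimpleGraph V} {e : V} {N : ℕ}

variable (G e N) in
def fold : starPower G e N →g G where
  toFun x := x.elim e fun p => p.2.1
  map_rel' := by
    rintro (_ | p) (_ | q) h
    · exact h.elim
    · exact h
    · exact h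
    · exact h.2

theorem fold_some (p : Fin N × {v : V // v ≠ e}) : fold G e N (some p) = p.2 := rfl

theorem root_mem_support {i j : Fin N} (hij : i ≠ j) {a b : {v : V // v ≠ e}}
    (p : (starPower G e N).Walk (some (i, a)) (some (j, b))) : none ∈ p.support := by
  suffices ∀ {x y} (q : (starPower G e N).Walk x y), none ∉ q.support →
      Option.map Prod.fst x = Option.map Prod.fst y by
    by_contra h
    simpa [hij] using this p h
  intro x y q hq
  induction q with
  | nil => rfl
  | @cons x z y hxz q ih =>
    rw [Walk.support_cons, List.mem_cons, not_or] at hq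
    match x, z, hxz with
    | some _, some _, hxz => simpa [hxz.1] using ih hq.2
    | none, _, _ => exact absurd rfl hq.1
    | some _, none, _ => exact absurd q.start_mem_support hq.2

variable [DecidableEq V]

variable (G e N) in
def copy (i : Fin N) : G →g starPower G e N where
  toFun := rootedEmbed e N i
  map_rel' {v w} h := by
    unfold rootedEmbed
    split_ifs with hv hw hw
    · exact absurd (hv.trans hw.symm) h.ne
    · subst hv; exact h
    · subst hw; exact h
    · exact ⟨rfl, h⟩

@[simp] theorem copy_apply (i : Fin N) (v : V) : copy G e N i v = rootedEmbed e N i v := rfl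

theorem fold_rootedEmbed (i : Fin N) (v : V) : fold G e N (rootedEmbed e N i v) = v := by
  by_cases hv : v = e
  · subst hv; simp [fold]
  · rw [rootedEmbed_of_ne i hv, fold_some]

theorem _root_.SimpleGraph.Connected.starPower (hconn : G.Connected) (e : V) (N : ℕ) :
    (starPower G e N).Connected := by
  refine (connected_iff_exists_forall_reachable _).2 ⟨none, ?_⟩
  rintro (_ | ⟨i, a⟩)
  · rfl
  · simpa [rootedEmbed_of_ne i a.2] using (hconn e a).map (copy G e N i)

theorem dist_rootedEmbed (hconn : G.Connected) (i : Fin N) (v w : V) :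
    (starPower G e N).dist (rootedEmbed e N i v) (rootedEmbed e N i w) = G.dist v w := by
  refine le_antisymm (by simpa using (hconn v w).dist_map_le (copy G e N i)) ?_
  simpa [fold_rootedEmbed] using
    ((hconn.starPower e N) (rootedEmbed e N i v) (rootedEmbed e N i w)).dist_map_le (fold G e N)

theorem dist_root (hconn : G.Connected) (p : Fin N × {v : V // v ≠ e}) :
    (starPower G e N).dist none (some p) = G.dist e p.2 := by
  simpa [rootedEmbed_of_ne p.1 p.2.2] using dist_rootedEmbed (e := e) hconn p.1 e p.2

theorem dist_some_some (hconn : G.Connected) (i : Fin N) (a b : {v : V // v ≠ e}) :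
    (starPower G e N).dist (some (i, a)) (some (i, b)) = G.dist a b := by
  simpa [rootedEmbed_of_ne i a.2, rootedEmbed_of_ne i b.2] using
    dist_rootedEmbed (e := e) hconn i a b

theorem dist_root_add_dist_root_le (hconn : G.Connected) {i j : Fin N} (hij : i ≠ j)
    (a b : {v : V // v ≠ e}) :
    G.dist a e + G.dist e b ≤ (starPower G e N).dist (some (i, a)) (some (j, b)) := by
  have := ((hconn.starPower e N) (some (i, a)) (some (j, b))).dist_add_dist_le_of_forall_mem_support
      (root_mem_support hij)
  rwa [dist_comm, dist_root hconn, dist_root hconn, dist_comm (u := e)] at this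

variable {k : ℕ}

theorem distGraph_adj_root_iff (hconn : G.Connected) (p : Fin N × {v : V // v ≠ e}) :
    (distGraph (starPower G e N) k).Adj none (some p) ↔ G.dist e p.2 = k := by
  simp [distGraph, dist_root hconn]

theorem fst_eq_of_distGraph_adj (hconn : G.Connected) {i j : Fin N} {a b : {v : V // v ≠ e}}
    (ha : G.dist e a = k) (h : (distGraph (starPower G e N) k).Adj (some (i, a)) (some (j, b))) :
    i = j := by
  by_contra hij
  have hb : 0 < G.dist e b := hconn.pos_dist_of_ne (Ne.symm b.2)
  have := dist_root_add_dist_root_le hconn hij a b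
  rw [h.2, dist_comm, ha] at this
  omega

theorem dist_eq_of_distGraph_adj (hconn : G.Connected) {i : Fin N} {a b : {v : V // v ≠ e}}
    (h : (distGraph (starPower G e N) k).Adj (some (i, a)) (some (i, b))) : G.dist a b = k := by
  rw [← dist_some_some hconn]
  exact h.2

variable [Fintype V] [DecidableRel (distGraph (starPower G e N) k).Adj]

theorem neighborFinset_distGraph_root (hconn : G.Connected) (hk : k ≠ 0) :
    (distGraph (starPower G e N) k).neighborFinset none =
      (univ ×ˢ ({v | G.dist e v = k} : Finset V)).image fun p => rootedEmbed e N p.1 p.2 := by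
  ext x
  rcases x with _ | ⟨i, a⟩
  · simp [Ne.symm hk]
  · simp [distGraph_adj_root_iff hconn]

theorem degree_distGraph_root (hconn : G.Connected) (hk : k ≠ 0) :
    (distGraph (starPower G e N) k).degree none = N * #{v | G.dist e v = k} := by
  rw [← card_neighborFinset_eq_degree, neighborFinset_distGraph_root hconn hk,
    card_image_of_injOn, card_product, card_univ, Fintype.card_fin]
  have hne {v : V} (hv : G.dist e v = k) : v ≠ e := by
    rintro rfl
    exact hk (by simpa using hv.symm)
  rintro ⟨i, v⟩ hv ⟨j, w⟩ hw h
  simp only [coe_product, coe_univ, coe_filter, Set.mem_prod, Set.mem_univ, Set.mem_ofPred_eq,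
    true_and, mem_univ] at hv hw
  simp only [rootedEmbed_of_ne i (hne hv), rootedEmbed_of_ne j (hne hw), Option.some.injEq,
    Prod.mk.injEq, Subtype.mk.injEq] at h
  rw [h.1, h.2]

theorem card_neighborFinset_root_inter_le (hconn : G.Connected) {y : StarVert V e N}
    (hy : y ≠ none) :
    #((distGraph (starPower G e N) k).neighborFinset none ∩
        (distGraph (starPower G e N) k).neighborFinset y) ≤ #{v | G.dist e v = k} := by
  obtain ⟨⟨j, b⟩, rfl⟩ := Option.ne_none_iff_exists'.1 hy
  refine (card_le_card fun x hx => ?_).trans (card_image_le (f := rootedEmbed e N j))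
  rw [mem_inter, mem_neighborFinset, mem_neighborFinset] at hx
  obtain ⟨hx₁, hx₂⟩ := hx
  rcases x with _ | ⟨i, a⟩
  · exact absurd rfl hx₁.ne
  have ha := (distGraph_adj_root_iff hconn _).1 hx₁
  obtain rfl := fst_eq_of_distGraph_adj hconn ha hx₂.symm
  exact mem_image.2 ⟨a, by simpa using ha, rootedEmbed_of_ne i a.2⟩

theorem card_neighborFinset_erase_root_le (hconn : G.Connected) {x : StarVert V e N}
    (hx : x ∈ (distGraph (starPower G e N) k).neighborFinset none) :
    #(((distGraph (starPower G e N) k).neighborFinset x).erase none) ≤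
      #{w | G.dist (fold G e N x) w = k} := by
  rw [mem_neighborFinset] at hx
  rcases x with _ | ⟨i, a⟩
  · exact absurd rfl hx.ne
  have ha := (distGraph_adj_root_iff hconn _).1 hx
  refine (card_le_card fun y hy => ?_).trans (card_image_le (f := rootedEmbed e N i))
  rw [mem_erase, mem_neighborFinset] at hy
  obtain ⟨hy₁, hy₂⟩ := hy
  rcases y with _ | ⟨j, b⟩
  · exact absurd rfl hy₁
  obtain rfl := fst_eq_of_distGraph_adj hconn ha hy₂
  refine mem_image.2 ⟨b, ?_, rootedEmbed_of_ne i b.2⟩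
  rw [mem_filter_univ]
  exact dist_eq_of_distGraph_adj hconn hy₂

end starPower

/-- Bounds on the number of closed walks of length 4 based at the root in the
distance `k`-graph of the `N`-fold star power:
`(Nσ)² ≤ (A⁴)_{ee} ≤ (Nσ)² + NσMσ`, and hence `1 ≤ ((A/√(Nσ))⁴)_{ee} ≤ 1 + M/N`. -/
theorem star_power_fourth_moment_bounds
    {V : Type*} [Fintype V] [DecidableEq V] (G : SimpleGraph V) (e : V)
    (hconn : G.Connected) (k : ℕ) (hk : 1 ≤ k)
    (σ : ℕ) (hσ : σ = Nat.card {v : V | G.dist e v = k}) (hσpos : 1 ≤ σ)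
    (M : ℕ) (hM : M = Finset.univ.sup fun x : V => Nat.card {v : V | G.dist x v = k})
    (N : ℕ) (hN : 1 ≤ N) :
    ((N * σ : ℝ) ^ 2 ≤ ((adjMat (distGraph (starPower G e N) k)) ^ 4) none none ∧
      ((adjMat (distGraph (starPower G e N) k)) ^ 4) none none ≤
        (N * σ : ℝ) ^ 2 + (N * σ : ℝ) * M * σ) ∧
    ((1 : ℝ) ≤ (((Real.sqrt (N * σ))⁻¹ • adjMat (distGraph (starPower G e N) k)) ^ 4) none none ∧
      (((Real.sqrt (N * σ))⁻¹ • adjMat (distGraph (starPower G e N) k)) ^ 4) none none ≤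
        1 + (M : ℝ) / N) := by
  classical
  set D := distGraph (starPower G e N) k
  rw [Nat.card_setOf_eq_card_filter] at hσ
  have hM' (x : V) : #{w | G.dist x w = k} ≤ M := by
    rw [hM, ← Nat.card_setOf_eq_card_filter]
    exact le_sup (f := fun x : V => Nat.card {v : V | G.dist x v = k}) (mem_univ x)
  have hdeg : D.degree none = N * σ := by
    rw [hσ, starPower.degree_distGraph_root hconn (by omega)]
  have hA4 : (adjMat D ^ 4) none none =
      ((∑ y, #(D.neighborFinset none ∩ D.neighborFinset y) ^ 2 : ℕ) : ℝ) := by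
    rw [adjMat_eq_adjMatrix, adjMatrix_pow_four_apply_self]
  have hlow : (N * σ : ℝ) ^ 2 ≤ (adjMat D ^ 4) none none := by
    rw [hA4]
    exact_mod_cast hdeg ▸ D.degree_sq_le_sum_sq_card_neighborFinset_inter none
  have hupp : (adjMat D ^ 4) none none ≤ (N * σ : ℝ) ^ 2 + (N * σ : ℝ) * M * σ := by
    rw [hA4]
    exact_mod_cast hdeg ▸ D.sum_sq_card_neighborFinset_inter_le none
      (fun y hy => hσ ▸ starPower.card_neighborFinset_root_inter_le hconn hy)
      (fun x hx => (starPower.card_neighborFinset_erase_root_le hconn hx).trans (hM' _))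
  have hNσ : (0 : ℝ) < N * σ := by
    have : (1 : ℝ) ≤ N := by exact_mod_cast hN
    have : (1 : ℝ) ≤ σ := by exact_mod_cast hσpos
    positivity
  have hscale : (((Real.sqrt (N * σ))⁻¹ • adjMat D) ^ 4) none none =
      (adjMat D ^ 4) none none / (N * σ) ^ 2 := by
    rw [smul_pow, Matrix.smul_apply, smul_eq_mul, inv_pow, show 4 = 2 * 2 from rfl, pow_mul,
      Real.sq_sqrt hNσ.le, inv_mul_eq_div]
  refine ⟨⟨hlow, hupp⟩, ?_, ?_⟩ <;> rw [hscale]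
  · rwa [one_le_div (by positivity)]
  · rw [div_le_iff₀ (by positivity)]
    calc (adjMat D ^ 4) none none ≤ (N * σ : ℝ) ^ 2 + (N * σ : ℝ) * M * σ := hupp
      _ = (1 + M / N) * (N * σ) ^ 2 := by field_simp
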